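/- (Main theorem.) Let f : 2^V → ℝ be submodular, and let x be a fractional allocation: x(v,i) ≥ 0 and Σ_{i=1}^k x(v,i) = 1 for every v ∈ V. Define A(i,θ) = {v : x(v,i) ≥ θ}, A(θ) = ∪_{i=1}^k A(i,θ), U(θ) = V \ A(θ). Then for any δ ∈ [1/2, 1], Σ_{i=1}^k ∫_0^δ f(A(i,θ)) dθ ≥ (kδ − δ − 1) f(∅) + ∫_0^δ f(A(θ)) dθ + ∫_0^1 f(U(θ)) dθ. -/

import Mathlib

/-!
Write `J(w) = ∫₀¹ f {w ≥ θ} dθ`, the Lovász extension of `f` on `[0,1]^V`. Truncating at `δ`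
turns the three integrals into `J(min(xᵢ, δ))`, `J(min(m, δ))` and `J(1 - m)`, where
`m = maxᵢ xᵢ` (the last one via `θ ↦ 1 - θ`). Since `δ ≥ 1/2`, every coordinate of `x v` except
the largest is at most `δ`, so `Σᵢ min(xᵢ, δ) - min(m, δ) = 1 - m`. The claim thus becomes
`J(maxᵢ yᵢ) + J(Σᵢ yᵢ - maxᵢ yᵢ) + (k - 2) f ∅ ≤ Σᵢ J(yᵢ)` for `yᵢ = min(xᵢ, δ)`, which follows
by induction on `k` from two properties of `J` for submodular `f`: the lattice inequality
`J(p ⊔ q) + J(p ⊓ q) ≤ J(p) + J(q)`, which holds level by level, and subadditivity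
`J(p + q) + f ∅ ≤ J(p) + J(q)`. The latter holds because `J - f ∅` is the largest value of
`⟨s, ·⟩` over the modular functions `s ≤ f - f ∅`, attained at Edmonds' greedy vector.
-/

open MeasureTheory Finset

section

variable {V : Type*}

def IsSubmodular (f : Set V → ℝ) : Prop :=
  ∀ A B : Set V, f (A ∩ B) + f (A ∪ B) ≤ f A + f B

/-- Edmonds' greedy vector: add the elements of `T` in decreasing order of `w`, each weighted by
its marginal gain. -/
theorem IsSubmodular.exists_greedy_weights [DecidableEq V] {f : Set V → ℝ}
    (hf : IsSubmodular f) (w : V → ℝ) (T : Finset V) :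
    ∃ s : V → ℝ, (∀ A ⊆ T, ∑ v ∈ A, s v ≤ f A - f ∅) ∧
      ∀ θ, ∑ v ∈ T with θ ≤ w v, s v = f ↑{v ∈ T | θ ≤ w v} - f ∅ := by
  induction T using Finset.induction_on_min_value w with
  | empty => exact ⟨0, fun A hA => by simp [subset_empty.1 hA], fun θ => by simp⟩
  | insert a T haT hmin ih =>
    obtain ⟨s, hle, heq⟩ := ih
    set s' := Function.update s a (f ↑(insert a T) - f T)
    have hs'a : s' a = f ↑(insert a T) - f T := Function.update_self ..
    have sum_eq {B : Finset V} (hB : a ∉ B) : ∑ v ∈ B, s' v = ∑ v ∈ B, s v :=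
      sum_congr rfl fun v hv => Function.update_of_ne (ne_of_mem_of_not_mem hv hB) _ _
    refine ⟨s', fun A hA => ?_, fun θ => ?_⟩
    · by_cases ha : a ∈ A
      · have hinter : (A : Set V) ∩ T = ↑(A.erase a) := by
          ext v
          have := @hA v
          simp only [Set.mem_inter_iff, mem_coe, mem_erase, mem_insert] at this ⊢
          grind
        have hunion : (A : Set V) ∪ T = ↑(insert a T) := by
          ext v
          have := @hA v
          simp only [Set.mem_union, mem_coe, mem_insert] at this ⊢
          grind
        have hsub := hf A T
        rw [hinter, hunion] at hsub
        have herase := hle (A.erase a) fun v hv => by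
          simpa [(mem_erase.1 hv).1] using hA (mem_of_mem_erase hv)
        rw [← add_sum_erase A s' ha, sum_eq (notMem_erase a A), hs'a]
        linarith
      · rw [sum_eq ha]
        exact hle A fun v hv => by simpa [ne_of_mem_of_not_mem hv ha] using hA hv
    · rw [filter_insert]
      split_ifs with hθ
      · have hT : {v ∈ T | θ ≤ w v} = T := filter_true_of_mem fun v hv => hθ.trans (hmin v hv)
        have hsT := heq (w a)
        rw [filter_true_of_mem fun v hv => hmin v hv] at hsT
        rw [hT, sum_insert haT, sum_eq haT, hs'a, hsT]
        ring
      · exact (sum_eq fun h => hθ (mem_filter.1 h).2).trans (heq θ)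

theorem measurable_levelSet (w : V → ℝ) : Measurable fun θ : ℝ => {v | θ ≤ w v} :=
  measurable_set_iff.2 fun _ => measurableSet_setOfPred.1 measurableSet_Iic

theorem Measurable.intervalIntegrable_comp [Finite V] (F : Set V → ℝ)
    {g : ℝ → Set V} (hg : Measurable g) (a b : ℝ) :
    IntervalIntegrable (fun θ => F (g θ)) volume a b := by
  obtain ⟨C, hC⟩ := Finite.exists_le fun A : Set V => ‖F A‖
  exact (intervalIntegrable_const (c := C)).mono_fun'
    ((measurable_of_countable F).comp hg).aestronglyMeasurable (.of_forall fun θ => hC _)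

theorem integral_levelSet_of_le {f : Set V → ℝ} {w : V → ℝ} {a b : ℝ} (hab : a ≤ b)
    (hw : ∀ v, w v ≤ a) : ∫ θ in a..b, f {v | θ ≤ w v} = (b - a) * f ∅ := by
  calc ∫ θ in a..b, f {v | θ ≤ w v} = ∫ _ in a..b, f ∅ := by
        refine intervalIntegral.integral_congr_ae (.of_forall fun θ hθ => ?_)
        rw [Set.uIoc_of_le hab] at hθ
        exact congrArg f <| Set.eq_empty_of_forall_notMem fun v (hv : θ ≤ w v) =>
          (hw v).not_gt (hθ.1.trans_le hv)
    _ = (b - a) * f ∅ := by simp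

/-- The Lovász extension of `f`, on `[0,1]^V`; `f ∅` is not normalised to `0`. -/
noncomputable def lovasz (f : Set V → ℝ) (w : V → ℝ) : ℝ :=
  ∫ θ in (0:ℝ)..1, f {v | θ ≤ w v}

theorem lovasz_zero (f : Set V → ℝ) : lovasz f (fun _ => 0) = f ∅ := by
  simpa [lovasz] using integral_levelSet_of_le (f := f) (w := fun _ => 0) zero_le_one
    fun _ => le_rfl

section LevelSets

variable [Fintype V]

theorem intervalIntegrable_comp_levelSet (F : Set V → ℝ) (w : V → ℝ) (a b : ℝ) :
    IntervalIntegrable (fun θ => F {v | θ ≤ w v}) volume a b :=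
  (measurable_levelSet w).intervalIntegrable_comp F a b

theorem intervalIntegrable_sum_levelSet (s w : V → ℝ) (a b : ℝ) :
    IntervalIntegrable (fun θ => ∑ v with θ ≤ w v, s v) volume a b := by
  classical
  convert intervalIntegrable_comp_levelSet (fun A => ∑ v with v ∈ A, s v) w a b using 3
  rfl

theorem integral_sum_levelSet (s w : V → ℝ) (hw : ∀ v, w v ∈ Set.Icc 0 1) :
    ∫ θ in (0:ℝ)..1, ∑ v with θ ≤ w v, s v = ∑ v, s v * w v := by
  classical
  have hterm (v : V) : (fun θ : ℝ => if θ ≤ w v then s v else 0) =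
      {θ | θ ≤ w v}.indicator fun _ => s v := by
    ext θ; simp [Set.indicator_apply]
  simp only [sum_filter]
  rw [intervalIntegral.integral_finsetSum fun v _ => ?_]
  · refine sum_congr rfl fun v _ => ?_
    rw [hterm, intervalIntegral.integral_indicator (hw v), intervalIntegral.integral_const,
      smul_eq_mul, sub_zero, mul_comm]
  · simpa using intervalIntegrable_sum_levelSet (fun u => if u = v then s v else 0) w 0 1

theorem lovasz_sub_eq_integral (f : Set V → ℝ) (w : V → ℝ) :
    lovasz f w - f ∅ = ∫ θ in (0:ℝ)..1, (f {v | θ ≤ w v} - f ∅) := by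
  rw [intervalIntegral.integral_sub (intervalIntegrable_comp_levelSet f w 0 1)
    intervalIntegrable_const]
  simp [lovasz]

theorem sum_mul_le_lovasz {f : Set V → ℝ} {s : V → ℝ}
    (hs : ∀ A : Finset V, ∑ v ∈ A, s v ≤ f A - f ∅) {w : V → ℝ} (hw : ∀ v, w v ∈ Set.Icc 0 1) :
    ∑ v, s v * w v ≤ lovasz f w - f ∅ := by
  rw [← integral_sum_levelSet s w hw, lovasz_sub_eq_integral]
  refine intervalIntegral.integral_mono_on zero_le_one (intervalIntegrable_sum_levelSet s w 0 1)
    ((intervalIntegrable_comp_levelSet f w 0 1).sub intervalIntegrable_const) fun θ _ => ?_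
  simpa using hs {v | θ ≤ w v}

theorem IsSubmodular.exists_sum_mul_eq_lovasz {f : Set V → ℝ} (hf : IsSubmodular f) {w : V → ℝ}
    (hw : ∀ v, w v ∈ Set.Icc 0 1) :
    ∃ s : V → ℝ, (∀ A : Finset V, ∑ v ∈ A, s v ≤ f A - f ∅) ∧
      ∑ v, s v * w v = lovasz f w - f ∅ := by
  classical
  obtain ⟨s, hle, heq⟩ := hf.exists_greedy_weights w univ
  refine ⟨s, fun A => hle A (subset_univ A), ?_⟩
  rw [← integral_sum_levelSet s w hw, lovasz_sub_eq_integral]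
  exact intervalIntegral.integral_congr fun θ _ => by simpa using heq θ

theorem IsSubmodular.lovasz_add_le {f : Set V → ℝ} (hf : IsSubmodular f) {p q : V → ℝ}
    (hp : ∀ v, 0 ≤ p v) (hq : ∀ v, 0 ≤ q v) (hpq : ∀ v, p v + q v ≤ 1) :
    lovasz f (fun v => p v + q v) + f ∅ ≤ lovasz f p + lovasz f q := by
  have hIcc {w : V → ℝ} (hw0 : ∀ v, 0 ≤ w v) (hw1 : ∀ v, w v ≤ p v + q v) (v : V) :
      w v ∈ Set.Icc 0 1 := ⟨hw0 v, (hw1 v).trans (hpq v)⟩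
  obtain ⟨s, hs, hsum⟩ := hf.exists_sum_mul_eq_lovasz
    (hIcc (fun v => add_nonneg (hp v) (hq v)) fun v => le_rfl)
  have hp' := sum_mul_le_lovasz hs (hIcc hp fun v => le_add_of_nonneg_right (hq v))
  have hq' := sum_mul_le_lovasz hs (hIcc hq fun v => le_add_of_nonneg_left (hp v))
  simp only [mul_add, sum_add_distrib] at hsum
  linarith

theorem IsSubmodular.lovasz_max_add_lovasz_min_le {f : Set V → ℝ} (hf : IsSubmodular f)
    (p q : V → ℝ) :
    lovasz f (fun v => max (p v) (q v)) + lovasz f (fun v => min (p v) (q v)) ≤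
      lovasz f p + lovasz f q := by
  simp only [lovasz]
  rw [← intervalIntegral.integral_add (intervalIntegrable_comp_levelSet f _ 0 1)
    (intervalIntegrable_comp_levelSet f _ 0 1), ← intervalIntegral.integral_add
    (intervalIntegrable_comp_levelSet f p 0 1) (intervalIntegrable_comp_levelSet f q 0 1)]
  refine intervalIntegral.integral_mono_on zero_le_one
    ((intervalIntegrable_comp_levelSet f _ 0 1).add (intervalIntegrable_comp_levelSet f _ 0 1))
    ((intervalIntegrable_comp_levelSet f p 0 1).add (intervalIntegrable_comp_levelSet f q 0 1))
    fun θ _ => ?_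
  simpa only [le_max_iff, le_min_iff, Set.ofPred_or, Set.ofPred_and, add_comm]
    using hf {v | θ ≤ p v} {v | θ ≤ q v}

theorem IsSubmodular.lovasz_sup'_add_lovasz_sum_sub_sup'_le {f : Set V → ℝ} (hf : IsSubmodular f)
    {ι : Type*} {I : Finset ι} (hI : I.Nonempty) {y : ι → V → ℝ}
    (hy0 : ∀ i ∈ I, ∀ v, 0 ≤ y i v) (hy1 : ∀ v, ∑ i ∈ I, y i v ≤ 1) :
    lovasz f (fun v => I.sup' hI (y · v)) + lovasz f (fun v => ∑ i ∈ I, y i v - I.sup' hI (y · v))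
      + (#I - 2 : ℝ) * f ∅ ≤ ∑ i ∈ I, lovasz f (y i) := by
  induction hI using Finset.Nonempty.cons_induction with
  | singleton a =>
    simp only [sup'_singleton, sum_singleton, card_singleton, sub_self, lovasz_zero]
    norm_num
  | cons a I haI hI ih =>
    set M := fun v => I.sup' hI (y · v)
    set S := fun v => ∑ i ∈ I, y i v
    have hya : ∀ v, 0 ≤ y a v := hy0 a (mem_cons_self a I)
    have hM0 (v : V) : 0 ≤ M v :=
      (hy0 _ (mem_cons_of_mem hI.choose_spec) v).trans (le_sup' (y · v) hI.choose_spec)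
    have hMS (v : V) : M v ≤ S v := sup'_le hI _ fun i hi =>
      single_le_sum (fun j hj => hy0 j (mem_cons_of_mem hj) v) hi
    have hS1 (v : V) : y a v + S v ≤ 1 := by simpa using hy1 v
    have IH := ih (fun i hi => hy0 i (mem_cons_of_mem hi)) fun v => by linarith [hS1 v, hya v]
    have hlattice := hf.lovasz_max_add_lovasz_min_le (y a) M
    have hadd := hf.lovasz_add_le (p := fun v => min (y a v) (M v)) (q := fun v => S v - M v)
      (fun v => le_min (hya v) (hM0 v)) (fun v => sub_nonneg.2 (hMS v))
      fun v => by linarith [min_le_left (y a v) (M v), hM0 v, hS1 v]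
    have hmerge : (fun v => min (y a v) (M v) + (S v - M v)) =
        fun v => y a v + S v - max (y a v) (M v) := by
      ext v; linarith [min_add_max (y a v) (M v)]
    rw [hmerge] at hadd
    simp only [sup'_cons hI, sum_cons, card_cons]
    push_cast
    linarith

theorem integral_levelSet_eq_lovasz_min (f : Set V → ℝ) (w : V → ℝ) {δ : ℝ}
    (hδ : δ ∈ Set.Icc (0:ℝ) 1) :
    ∫ θ in (0:ℝ)..δ, f {v | θ ≤ w v} = lovasz f (fun v => min (w v) δ) - (1 - δ) * f ∅ := by
  rw [lovasz, ← intervalIntegral.integral_add_adjacent_intervals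
    (intervalIntegrable_comp_levelSet f _ 0 δ) (intervalIntegrable_comp_levelSet f _ δ 1),
    integral_levelSet_of_le hδ.2 fun v => min_le_right _ _, add_sub_cancel_right]
  refine intervalIntegral.integral_congr fun θ hθ => ?_
  rw [Set.uIcc_of_le hδ.1] at hθ
  simp only [le_min_iff, hθ.2, and_true]

theorem integral_strictLevelSet_eq_lovasz (f : Set V → ℝ) (w : V → ℝ) :
    ∫ θ in (0:ℝ)..1, f {v | w v < θ} = lovasz f (fun v => 1 - w v) := by
  have hreflect := intervalIntegral.integral_comp_sub_left (a := 0) (b := 1)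
    (fun θ => f {v | w v < θ}) 1
  norm_num at hreflect
  rw [← hreflect, lovasz]
  -- the two level sets differ only at the finitely many `θ = 1 - w v`
  have hnull : ∀ᵐ θ : ℝ, θ ∉ Set.range fun v => 1 - w v :=
    measure_eq_zero_iff_ae_notMem.1 ((Set.finite_range _).measure_zero volume)
  refine intervalIntegral.integral_congr_ae (hnull.mono fun θ hθ _ => ?_)
  congr 1
  ext v
  have hne : θ ≠ 1 - w v := fun he => hθ ⟨v, he.symm⟩
  simp only [Set.mem_ofPred_eq]
  constructor
  · intro h; linarith
  · intro h; linarith [lt_of_le_of_ne h hne]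

end LevelSets

end

theorem sum_min_sub_min_sup' {ι : Type*} {I : Finset ι} (hI : I.Nonempty) {a : ι → ℝ}
    (h0 : ∀ i ∈ I, 0 ≤ a i) (h1 : ∑ i ∈ I, a i = 1) {δ : ℝ} (hδ : 1 / 2 ≤ δ) :
    ∑ i ∈ I, min (a i) δ - min (I.sup' hI a) δ = 1 - I.sup' hI a := by
  classical
  obtain ⟨j, hj, hmax⟩ := exists_mem_eq_sup' hI a
  have hsmall : ∀ i ∈ I.erase j, min (a i) δ = a i := fun i hi => by
    obtain ⟨hij, hi⟩ := mem_erase.1 hi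
    have hpair := add_le_sum h0 hi hj hij
    have := hmax ▸ le_sup' a hi
    exact min_eq_left (by linarith)
  rw [← add_sum_erase I _ hj] at h1
  rw [← add_sum_erase I _ hj, sum_congr rfl hsmall, hmax]
  linarith

theorem submp_main_theorem {V : Type*} [Fintype V] {k : ℕ} (hk : 1 ≤ k)
    (f : Set V → ℝ)
    (hsub : ∀ A B : Set V, f A + f B ≥ f (A ∩ B) + f (A ∪ B))
    (x : V → Fin k → ℝ)
    (hx0 : ∀ v i, 0 ≤ x v i) (hxsum : ∀ v, ∑ i, x v i = 1)
    (δ : ℝ) (hδ : δ ∈ Set.Icc (1/2 : ℝ) 1) :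
    ∑ i : Fin k, ∫ θ in (0:ℝ)..δ, f {v : V | θ ≤ x v i} ≥
      ((k : ℝ) * δ - δ - 1) * f (∅ : Set V)
        + (∫ θ in (0:ℝ)..δ, f {v : V | ∃ i : Fin k, θ ≤ x v i})
        + ∫ θ in (0:ℝ)..1, f {v : V | ∀ i : Fin k, x v i < θ} := by
  have hf : IsSubmodular f := hsub
  have hδ01 : δ ∈ Set.Icc (0:ℝ) 1 := ⟨by linarith [hδ.1], hδ.2⟩
  have hI : (univ : Finset (Fin k)).Nonempty := univ_nonempty_iff.2 ⟨⟨0, hk⟩⟩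
  set m := fun v => univ.sup' hI (x v)
  have hA (θ : ℝ) : {v | ∃ i, θ ≤ x v i} = {v | θ ≤ m v} := by ext v; simp [m, le_sup'_iff]
  have hU (θ : ℝ) : {v | ∀ i, x v i < θ} = {v | m v < θ} := by ext v; simp [m, sup'_lt_iff]
  have hsup (v : V) : univ.sup' hI (fun i => min (x v i) δ) = min (m v) δ :=
    (apply_sup'_eq_sup'_comp hI (min · δ) fun a b => min_max_distrib_right a b δ).symm
  have hrest (v : V) : ∑ i, min (x v i) δ - min (m v) δ = 1 - m v :=
    sum_min_sub_min_sup' hI (fun i _ => hx0 v i) (hxsum v) hδ.1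
  have key := hf.lovasz_sup'_add_lovasz_sum_sub_sup'_le hI (y := fun i v => min (x v i) δ)
    (fun i _ v => le_min (hx0 v i) hδ01.1)
    fun v => (sum_le_sum fun i _ => min_le_left _ _).trans (hxsum v).le
  simp only [hsup, hrest, card_univ, Fintype.card_fin] at key
  simp only [hA, hU, integral_levelSet_eq_lovasz_min f _ hδ01, integral_strictLevelSet_eq_lovasz,
    sum_sub_distrib, sum_const, card_univ, Fintype.card_fin, nsmul_eq_mul]
  linarith
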